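/- The atomic weight of a sum of partizan games is the sum of their atomic weights: AW(G + H) = AW(G) + AW(H), whenever both atomic weights exist (in particular for all all-small games). -/

import Mathlib

namespace SetTheory

/-- Port of the pre-2025 Mathlib `SetTheory.PGame` (removed from Mathlib). -/
inductive PGame : Type (u + 1)
  | mk : ∀ α β : Type u, (α → PGame) → (β → PGame) → PGame

namespace PGame

/-- `Imm y x`: `y` is an immediate option of `x`. -/
inductive Imm : PGame.{u} → PGame.{u} → Prop
  | left (xl xr : Type u) (xL : xl → PGame.{u}) (xR : xr → PGame.{u}) (i : xl) :
      Imm (xL i) (mk xl xr xL xR)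
  | right (xl xr : Type u) (xL : xl → PGame.{u}) (xR : xr → PGame.{u}) (j : xr) :
      Imm (xR j) (mk xl xr xL xR)

theorem imm_wf : WellFounded Imm.{u} :=
  ⟨fun x => by
    induction x with
    | mk xl xr xL xR ihl ihr =>
      exact Acc.intro _ (fun y h => by
        cases h with
        | left _ _ _ _ i => exact ihl i
        | right _ _ _ _ j => exact ihr j)⟩

instance : WellFoundedRelation PGame.{u} := ⟨Imm, imm_wf⟩

/-- Simultaneous definition of `≤` (first component) and `⧏` (second component). -/
def leLF : PGame.{u} → PGame.{u} → Prop × Prop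
  | mk xl xr xL xR, mk yl yr yL yR =>
    ((∀ i, (leLF (xL i) (mk yl yr yL yR)).2) ∧ ∀ j, (leLF (mk xl xr xL xR) (yR j)).2,
     (∃ i, (leLF (mk xl xr xL xR) (yL i)).1) ∨ ∃ j, (leLF (xR j) (mk yl yr yL yR)).1)
termination_by x y => (x, y)
decreasing_by
  all_goals first
    | exact Prod.Lex.left _ _ (Imm.left _ _ _ _ _)
    | exact Prod.Lex.right _ (Imm.left _ _ _ _ _)
    | exact Prod.Lex.left _ _ (Imm.right _ _ _ _ _)
    | exact Prod.Lex.right _ (Imm.right _ _ _ _ _)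

instance : LE PGame.{u} := ⟨fun x y => (leLF x y).1⟩

/-- `x ⧏ y` means `¬ y ≤ x` (Left wins `y - x` moving first). -/
def LF (x y : PGame.{u}) : Prop := ¬y ≤ x

infixl:50 " ⧏ " => PGame.LF

instance : Zero PGame.{u} := ⟨⟨PEmpty, PEmpty, PEmpty.elim, PEmpty.elim⟩⟩

instance : One PGame.{u} := ⟨⟨PUnit, PEmpty, fun _ => 0, PEmpty.elim⟩⟩

/-- The negation of a game. -/
def neg : PGame.{u} → PGame.{u}
  | ⟨l, r, L, R⟩ => ⟨r, l, fun i => neg (R i), fun i => neg (L i)⟩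

instance : Neg PGame.{u} := ⟨neg⟩

/-- The sum of two games. -/
def add : PGame.{u} → PGame.{u} → PGame.{u}
  | mk xl xr xL xR, mk yl yr yL yR =>
    mk (xl ⊕ yl) (xr ⊕ yr)
      (Sum.elim (fun i => add (xL i) (mk yl yr yL yR)) (fun i => add (mk xl xr xL xR) (yL i)))
      (Sum.elim (fun i => add (xR i) (mk yl yr yL yR)) (fun i => add (mk xl xr xL xR) (yR i)))
termination_by x y => (x, y)
decreasing_by
  all_goals first
    | exact Prod.Lex.left _ _ (Imm.left _ _ _ _ _)
    | exact Prod.Lex.right _ (Imm.left _ _ _ _ _)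
    | exact Prod.Lex.left _ _ (Imm.right _ _ _ _ _)
    | exact Prod.Lex.right _ (Imm.right _ _ _ _ _)

instance : Add PGame.{u} := ⟨add⟩

/-- The game `* = {0 | 0}`. -/
def star : PGame.{u} := ⟨PUnit, PUnit, fun _ => 0, fun _ => 0⟩

/-- The nim-heap of ordinal size `o`. -/
noncomputable def nim (o : Ordinal.{u}) : PGame.{u} :=
  ⟨o.ToType, o.ToType, fun x => nim (Ordinal.ToType.mk.symm x).val,
    fun x => nim (Ordinal.ToType.mk.symm x).val⟩
termination_by o
decreasing_by all_goals exact (Ordinal.ToType.mk.symm x).prop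

end PGame

end SetTheory

open SetTheory PGame

namespace MixedDeletion

/-- The degree of a vertex `v` with respect to an edge set `E`. -/
def deg (E : Finset (Sym2 ℕ)) (v : ℕ) : ℕ := (E.filter (fun e => v ∈ e)).card

/-- The graph position with vertex set `V` and edge set `E` has no isolated vertex. -/
def NoIsol (V : Finset ℕ) (E : Finset (Sym2 ℕ)) : Prop := ∀ v ∈ V, 0 < deg E v

/-- Result of Left deleting the vertex `v`: remove `v` and all incident edges. -/
def delV (V : Finset ℕ) (E : Finset (Sym2 ℕ)) (v : ℕ) : Finset ℕ × Finset (Sym2 ℕ) :=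
  (V.erase v, E.filter (fun e => v ∉ e))

/-- Left may legally delete vertex `v` under the base (Classic) rules:
`v` is a vertex and the deletion creates no isolated vertex. -/
def LeftOK (V : Finset ℕ) (E : Finset (Sym2 ℕ)) (v : ℕ) : Prop :=
  v ∈ V ∧ NoIsol (V.erase v) (E.filter (fun e => v ∉ e))

/-- Right may legally delete edge `e` under the base (Classic) rules:
`e` is an edge and the deletion creates no isolated vertex. -/
def RightOK (V : Finset ℕ) (E : Finset (Sym2 ℕ)) (e : Sym2 ℕ) : Prop :=
  e ∈ E ∧ NoIsol V (E.erase e)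

/-- The Classic Variant of the Mixed Deletion Game, as a partizan game:
Left deletes a vertex (and incident edges), Right deletes an edge,
and no move may create an isolated vertex. -/
def classicG : Finset ℕ → Finset (Sym2 ℕ) → PGame
  | V, E =>
    PGame.mk {v : ℕ // LeftOK V E v} {e : Sym2 ℕ // RightOK V E e}
      (fun x => classicG (V.erase x.val) (E.filter (fun e => x.val ∉ e)))
      (fun x => classicG V (E.erase x.val))
  termination_by V E => V.card + E.card
  decreasing_by
  · have h1 : (V.erase x.val).card < V.card := Finset.card_erase_lt_of_mem x.2.1
    have h2 : (E.filter (fun e => x.val ∉ e)).card ≤ E.card := Finset.card_filter_le _ _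
    omega
  · have h1 : (E.erase x.val).card < E.card := Finset.card_erase_lt_of_mem x.2.1
    omega

/-- The Forbidden Leaf Variant: as the Classic Variant, but Left may not
delete leaf vertices (vertices of degree one). -/
def flG : Finset ℕ → Finset (Sym2 ℕ) → PGame
  | V, E =>
    PGame.mk {v : ℕ // LeftOK V E v ∧ deg E v ≠ 1} {e : Sym2 ℕ // RightOK V E e}
      (fun x => flG (V.erase x.val) (E.filter (fun e => x.val ∉ e)))
      (fun x => flG V (E.erase x.val))
  termination_by V E => V.card + E.card
  decreasing_by
  · have h1 : (V.erase x.val).card < V.card := Finset.card_erase_lt_of_mem x.2.1.1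
    have h2 : (E.filter (fun e => x.val ∉ e)).card ≤ E.card := Finset.card_filter_le _ _
    omega
  · have h1 : (E.erase x.val).card < E.card := Finset.card_erase_lt_of_mem x.2.1
    omega

/-- The Mutual Failures Variant: as the Classic Variant, but in any graph
position a player has a legal move if and only if the opponent does; i.e. a
base-rules move is legal only if the opponent also has a base-rules move. -/
def mfG : Finset ℕ → Finset (Sym2 ℕ) → PGame
  | V, E =>
    PGame.mk {v : ℕ // LeftOK V E v ∧ ∃ e, RightOK V E e}
      {e : Sym2 ℕ // RightOK V E e ∧ ∃ v, LeftOK V E v}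
      (fun x => mfG (V.erase x.val) (E.filter (fun e => x.val ∉ e)))
      (fun x => mfG V (E.erase x.val))
  termination_by V E => V.card + E.card
  decreasing_by
  · have h1 : (V.erase x.val).card < V.card := Finset.card_erase_lt_of_mem x.2.1.1
    have h2 : (E.filter (fun e => x.val ∉ e)).card ≤ E.card := Finset.card_filter_le _ _
    omega
  · have h1 : (E.erase x.val).card < E.card := Finset.card_erase_lt_of_mem x.2.1.1
    omega

/-- Edge set of the path graph on vertices `0, 1, …, n-1`. -/
def pathE (n : ℕ) : Finset (Sym2 ℕ) := (Finset.range (n - 1)).image (fun i => s(i, i + 1))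

/-- Edge set of the cycle graph on vertices `0, 1, …, n-1`. -/
def cycleE (n : ℕ) : Finset (Sym2 ℕ) := (Finset.range n).image (fun i => s(i, (i + 1) % n))

/-- Edge set of the complete graph on vertices `0, 1, …, n-1`. -/
def completeE (n : ℕ) : Finset (Sym2 ℕ) := (Finset.range n).sym2.filter (fun e => ¬ e.IsDiag)

/-- The path position `P_n` in the Classic Variant. -/
def classicPath (n : ℕ) : PGame := classicG (Finset.range n) (pathE n)

/-- The cycle position `C_n` in the Classic Variant. -/
def classicCycle (n : ℕ) : PGame := classicG (Finset.range n) (cycleE n)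

/-- The complete graph position `K_n` in the Classic Variant. -/
def classicComplete (n : ℕ) : PGame := classicG (Finset.range n) (completeE n)

/-- The path position `P_n` in the Forbidden Leaf Variant. -/
def flPath (n : ℕ) : PGame := flG (Finset.range n) (pathE n)

/-- The cycle position `C_n` in the Forbidden Leaf Variant. -/
def flCycle (n : ℕ) : PGame := flG (Finset.range n) (cycleE n)

/-- The complete graph position `K_n` in the Forbidden Leaf Variant. -/
def flComplete (n : ℕ) : PGame := flG (Finset.range n) (completeE n)

/-- The path position `P_n` in the Mutual Failures Variant. -/
def mfPath (n : ℕ) : PGame := mfG (Finset.range n) (pathE n)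

/-- The cycle position `C_n` in the Mutual Failures Variant. -/
def mfCycle (n : ℕ) : PGame := mfG (Finset.range n) (cycleE n)

/-- The complete graph position `K_n` in the Mutual Failures Variant. -/
def mfComplete (n : ℕ) : PGame := mfG (Finset.range n) (completeE n)

/-- The partizan game equal to a natural number `n`. -/
def natPG : ℕ → PGame
  | 0 => 0
  | n + 1 => natPG n + 1

/-- The partizan game equal to an integer `z`. -/
def intPG (z : ℤ) : PGame := if 0 ≤ z then natPG z.toNat else -natPG (-z).toNat

/-- The game up, `↑ = {0 | *}`. -/
def up : PGame := PGame.mk PUnit PUnit (fun _ => 0) (fun _ => star)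

/-- The game down, `↓ = {* | 0}`. -/
def down : PGame := -up

/-- The sum of `n` copies of up. -/
def natUp : ℕ → PGame
  | 0 => 0
  | n + 1 => natUp n + up

/-- The game `z·↑`: `|z|` copies of up if `z ≥ 0`, and `|z|` copies of down otherwise. -/
def zUp (z : ℤ) : PGame := if 0 ≤ z then natUp z.toNat else -natUp (-z).toNat

/-- Two games have the same outcome: Left wins moving first in one iff in the other,
and Right wins moving first in one iff in the other. -/
def SameOutcome (A B : PGame) : Prop := (0 ⧏ A ↔ 0 ⧏ B) ∧ (A ⧏ 0 ↔ B ⧏ 0)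

/-- Far-star equivalence: `G + X + ✶` and `H + X + ✶` have the same outcome for
every game `X`, where `✶` (far star) is any nim-heap `*k` with `k ≥ 2`. -/
def FarStarEquiv (G H : PGame) : Prop :=
  ∀ (X : PGame) (k : ℕ), 2 ≤ k → SameOutcome (G + X + nim k) (H + X + nim k)

/-- `G` has atomic weight `z` if `G` is far-star equivalent to `z·↑`. -/
def AtomicWeight (G : PGame) (z : ℤ) : Prop := FarStarEquiv G (zUp z)

/-- A game is all-small if in every subposition Left has a move iff Right has a move. -/
def AllSmall : PGame → Prop
  | PGame.mk l r L R =>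
    (Nonempty l ↔ Nonempty r) ∧ (∀ i, AllSmall (L i)) ∧ (∀ j, AllSmall (R j))

end MixedDeletion

/-!
Since `X` ranges over all games in the definition of far-star equivalence, a summand can be
absorbed into `X`: if `H ≈✶ H'` then `G + H ≈✶ G + H'`. So far-star equivalence is a congruence
for addition, whence `G + H ≈✶ a·↑ + b·↑`; and `a·↑ + b·↑ = (a + b)·↑` is an identity in the
abelian group of games modulo equivalence, under which far-star equivalence is invariant.
-/

namespace SetTheory.PGame

def IsLeftOption : PGame.{u} → PGame.{u} → Prop
  | y, mk _ _ L _ => ∃ i, L i = y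

def IsRightOption : PGame.{u} → PGame.{u} → Prop
  | y, mk _ _ _ R => ∃ j, R j = y

section Options

variable {l r : Type u} {L : l → PGame.{u}} {R : r → PGame.{u}} {x x' y y' z : PGame.{u}}

theorem isLeftOption_mk (i : l) : IsLeftOption (L i) (mk l r L R) := ⟨i, rfl⟩

theorem isRightOption_mk (j : r) : IsRightOption (R j) (mk l r L R) := ⟨j, rfl⟩

theorem IsLeftOption.imm (h : IsLeftOption x' x) : Imm x' x := by
  cases x
  obtain ⟨i, rfl⟩ := h
  exact Imm.left _ _ _ _ i

theorem IsRightOption.imm (h : IsRightOption x' x) : Imm x' x := by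
  cases x
  obtain ⟨j, rfl⟩ := h
  exact Imm.right _ _ _ _ j

theorem not_isLeftOption_zero : ¬IsLeftOption x 0 := fun ⟨i, _⟩ => PEmpty.elim i

theorem not_isRightOption_zero : ¬IsRightOption x 0 := fun ⟨j, _⟩ => PEmpty.elim j

theorem isLeftOption_add_iff :
    IsLeftOption z (x + y) ↔
      (∃ x', IsLeftOption x' x ∧ z = x' + y) ∨ ∃ y', IsLeftOption y' y ∧ z = x + y' := by
  cases x; cases y
  show IsLeftOption z (add _ _) ↔ _
  rw [add]
  constructor
  · rintro ⟨i | i, rfl⟩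
    exacts [.inl ⟨_, isLeftOption_mk i, rfl⟩, .inr ⟨_, isLeftOption_mk i, rfl⟩]
  · rintro (⟨_, ⟨i, rfl⟩, rfl⟩ | ⟨_, ⟨i, rfl⟩, rfl⟩)
    exacts [⟨.inl i, rfl⟩, ⟨.inr i, rfl⟩]

theorem isRightOption_add_iff :
    IsRightOption z (x + y) ↔
      (∃ x', IsRightOption x' x ∧ z = x' + y) ∨ ∃ y', IsRightOption y' y ∧ z = x + y' := by
  cases x; cases y
  show IsRightOption z (add _ _) ↔ _
  rw [add]
  constructor
  · rintro ⟨j | j, rfl⟩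
    exacts [.inl ⟨_, isRightOption_mk j, rfl⟩, .inr ⟨_, isRightOption_mk j, rfl⟩]
  · rintro (⟨_, ⟨j, rfl⟩, rfl⟩ | ⟨_, ⟨j, rfl⟩, rfl⟩)
    exacts [⟨.inl j, rfl⟩, ⟨.inr j, rfl⟩]

theorem IsLeftOption.add_right (h : IsLeftOption x' x) (y : PGame) :
    IsLeftOption (x' + y) (x + y) :=
  isLeftOption_add_iff.2 (.inl ⟨x', h, rfl⟩)

theorem IsLeftOption.add_left (h : IsLeftOption y' y) (x : PGame) :
    IsLeftOption (x + y') (x + y) :=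
  isLeftOption_add_iff.2 (.inr ⟨y', h, rfl⟩)

theorem IsRightOption.add_right (h : IsRightOption x' x) (y : PGame) :
    IsRightOption (x' + y) (x + y) :=
  isRightOption_add_iff.2 (.inl ⟨x', h, rfl⟩)

theorem IsRightOption.add_left (h : IsRightOption y' y) (x : PGame) :
    IsRightOption (x + y') (x + y) :=
  isRightOption_add_iff.2 (.inr ⟨y', h, rfl⟩)

theorem isLeftOption_neg_iff : IsLeftOption z (-x) ↔ ∃ x', IsRightOption x' x ∧ z = -x' := by
  cases x
  constructor
  · rintro ⟨j, rfl⟩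
    exact ⟨_, isRightOption_mk j, rfl⟩
  · rintro ⟨_, ⟨j, rfl⟩, rfl⟩
    exact ⟨j, rfl⟩

theorem isRightOption_neg_iff : IsRightOption z (-x) ↔ ∃ x', IsLeftOption x' x ∧ z = -x' := by
  cases x
  constructor
  · rintro ⟨i, rfl⟩
    exact ⟨_, isLeftOption_mk i, rfl⟩
  · rintro ⟨_, ⟨i, rfl⟩, rfl⟩
    exact ⟨i, rfl⟩

end Options

section Order

variable {x x' y y' z : PGame.{u}}

theorem leLF_snd_iff (x y : PGame.{u}) :
    ((leLF x y).2 ↔ ¬(leLF y x).1) ∧ ((leLF y x).2 ↔ ¬(leLF x y).1) := by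
  induction x generalizing y with
  | mk xl xr xL xR ihxl ihxr =>
  induction y with
  | mk yl yr yL yR ihyl ihyr =>
  rw [leLF, leLF]
  simp only [(ihyl _).2, (ihxr _ _).2, (ihxl _ _).1, (ihyr _).1, not_and_or, not_forall, not_not,
    and_self]

theorem le_iff_forall_lf :
    x ≤ y ↔ (∀ x', IsLeftOption x' x → x' ⧏ y) ∧ ∀ y', IsRightOption y' y → x ⧏ y' := by
  cases x; cases y
  show (leLF _ _).1 ↔ _
  rw [leLF]
  simp only [(leLF_snd_iff _ _).1]
  constructor
  · rintro ⟨hl, hr⟩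
    exact ⟨by rintro _ ⟨i, rfl⟩; exact hl i, by rintro _ ⟨j, rfl⟩; exact hr j⟩
  · rintro ⟨hl, hr⟩
    exact ⟨fun i => hl _ (isLeftOption_mk i), fun j => hr _ (isRightOption_mk j)⟩

theorem lf_iff_exists_le :
    x ⧏ y ↔ (∃ y', IsLeftOption y' y ∧ x ≤ y') ∨ ∃ x', IsRightOption x' x ∧ x' ≤ y := by
  rw [LF, le_iff_forall_lf]
  simp only [LF, not_and_or, not_forall, not_not, exists_prop]

theorem leftOption_lf_of_le (h : x ≤ y) (hx : IsLeftOption x' x) : x' ⧏ y :=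
  (le_iff_forall_lf.1 h).1 x' hx

theorem lf_rightOption_of_le (h : x ≤ y) (hy : IsRightOption y' y) : x ⧏ y' :=
  (le_iff_forall_lf.1 h).2 y' hy

theorem lf_of_le_leftOption (hy : IsLeftOption y' y) (h : x ≤ y') : x ⧏ y :=
  lf_iff_exists_le.2 (.inl ⟨y', hy, h⟩)

theorem lf_of_rightOption_le (hx : IsRightOption x' x) (h : x' ≤ y) : x ⧏ y :=
  lf_iff_exists_le.2 (.inr ⟨x', hx, h⟩)

theorem le_of_exists (hl : ∀ x', IsLeftOption x' x → ∃ y', IsLeftOption y' y ∧ x' ≤ y')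
    (hr : ∀ y', IsRightOption y' y → ∃ x', IsRightOption x' x ∧ x' ≤ y') : x ≤ y :=
  le_iff_forall_lf.2
    ⟨fun x' hx' => let ⟨_, hy', h⟩ := hl x' hx'; lf_of_le_leftOption hy' h,
      fun y' hy' => let ⟨_, hx', h⟩ := hr y' hy'; lf_of_rightOption_le hx' h⟩

protected theorem le_refl (x : PGame) : x ≤ x := by
  induction x using imm_wf.induction with | _ x ih =>
  exact le_of_exists (fun x' h => ⟨x', h, ih x' h.imm⟩) (fun y' h => ⟨y', h, ih y' h.imm⟩)

/-- Proving the three rotations together lets the induction hypothesis be applied to a rotated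
triple. -/
theorem le_trans_cyclic (x y z : PGame.{u}) :
    (x ≤ y → y ≤ z → x ≤ z) ∧ (y ≤ z → z ≤ x → y ≤ x) ∧ (z ≤ x → x ≤ y → z ≤ y) := by
  induction x using imm_wf.induction generalizing y z with | _ x ihx =>
  induction y using imm_wf.induction generalizing z with | _ y ihy =>
  induction z using imm_wf.induction with | _ z ihz =>
  refine ⟨fun hxy hyz => ?_, fun hyz hzx => ?_, fun hzx hxy => ?_⟩
  · refine le_iff_forall_lf.2 ⟨fun x' hx' hzx' => ?_, fun z' hz' hz'x => ?_⟩
    · exact leftOption_lf_of_le hxy hx' ((ihx x' hx'.imm y z).2.1 hyz hzx')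
    · exact lf_rightOption_of_le hyz hz' ((ihz z' hz'.imm).2.2 hz'x hxy)
  · refine le_iff_forall_lf.2 ⟨fun y' hy' hxy' => ?_, fun x' hx' hx'y => ?_⟩
    · exact leftOption_lf_of_le hyz hy' ((ihy y' hy'.imm z).2.2 hzx hxy')
    · exact lf_rightOption_of_le hzx hx' ((ihx x' hx'.imm y z).1 hx'y hyz)
  · refine le_iff_forall_lf.2 ⟨fun z' hz' hyz' => ?_, fun y' hy' hy'z => ?_⟩
    · exact leftOption_lf_of_le hzx hz' ((ihz z' hz'.imm).1 hxy hyz')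
    · exact lf_rightOption_of_le hxy hy' ((ihy y' hy'.imm z).2.1 hy'z hzx)

instance : Preorder PGame.{u} where
  le_refl := PGame.le_refl
  le_trans x y z := (le_trans_cyclic x y z).1

instance setoid : Setoid PGame.{u} :=
  AntisymmRel.setoid PGame (· ≤ ·)

end Order

section Add

variable {x x' y y' : PGame.{u}}

theorem add_comm_le (x y : PGame.{u}) : x + y ≤ y + x := by
  induction x using imm_wf.induction generalizing y with | _ x ihx =>
  induction y using imm_wf.induction with | _ y ihy =>
  refine le_of_exists (fun a ha => ?_) (fun b hb => ?_)
  · rcases isLeftOption_add_iff.1 ha with ⟨x', hx', rfl⟩ | ⟨y', hy', rfl⟩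
    exacts [⟨_, hx'.add_left y, ihx x' hx'.imm y⟩, ⟨_, hy'.add_right x, ihy y' hy'.imm⟩]
  · rcases isRightOption_add_iff.1 hb with ⟨y', hy', rfl⟩ | ⟨x', hx', rfl⟩
    exacts [⟨_, hy'.add_left x, ihy y' hy'.imm⟩, ⟨_, hx'.add_right y, ihx x' hx'.imm y⟩]

theorem add_comm_equiv (x y : PGame.{u}) : x + y ≈ y + x :=
  ⟨add_comm_le x y, add_comm_le y x⟩

theorem add_assoc_le (x y z : PGame.{u}) : x + y + z ≤ x + (y + z) := by
  induction x using imm_wf.induction generalizing y z with | _ x ihx =>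
  induction y using imm_wf.induction generalizing z with | _ y ihy =>
  induction z using imm_wf.induction with | _ z ihz =>
  refine le_of_exists (fun a ha => ?_) (fun b hb => ?_)
  · rcases isLeftOption_add_iff.1 ha with ⟨s, hs, rfl⟩ | ⟨z', hz', rfl⟩
    · rcases isLeftOption_add_iff.1 hs with ⟨x', hx', rfl⟩ | ⟨y', hy', rfl⟩
      · exact ⟨_, hx'.add_right _, ihx x' hx'.imm y z⟩
      · exact ⟨_, (hy'.add_right z).add_left x, ihy y' hy'.imm z⟩
    · exact ⟨_, (hz'.add_left y).add_left x, ihz z' hz'.imm⟩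
  · rcases isRightOption_add_iff.1 hb with ⟨x', hx', rfl⟩ | ⟨s, hs, rfl⟩
    · exact ⟨_, (hx'.add_right y).add_right z, ihx x' hx'.imm y z⟩
    · rcases isRightOption_add_iff.1 hs with ⟨y', hy', rfl⟩ | ⟨z', hz', rfl⟩
      · exact ⟨_, (hy'.add_left x).add_right z, ihy y' hy'.imm z⟩
      · exact ⟨_, hz'.add_left _, ihz z' hz'.imm⟩

theorem add_assoc_equiv (x y z : PGame.{u}) : x + y + z ≈ x + (y + z) := by
  refine ⟨add_assoc_le x y z, ?_⟩
  calc x + (y + z) ≤ y + z + x := add_comm_le _ _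
    _ ≤ y + (z + x) := add_assoc_le _ _ _
    _ ≤ z + x + y := add_comm_le _ _
    _ ≤ z + (x + y) := add_assoc_le _ _ _
    _ ≤ x + y + z := add_comm_le _ _

theorem zero_add_equiv (x : PGame.{u}) : 0 + x ≈ x := by
  induction x using imm_wf.induction with | _ x ih =>
  constructor
  · refine le_of_exists (fun a ha => ?_) (fun b hb => ⟨0 + b, hb.add_left 0, (ih b hb.imm).1⟩)
    rcases isLeftOption_add_iff.1 ha with ⟨_, h0, _⟩ | ⟨x', hx', rfl⟩
    exacts [absurd h0 not_isLeftOption_zero, ⟨x', hx', (ih x' hx'.imm).1⟩]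
  · refine le_of_exists (fun a ha => ⟨0 + a, ha.add_left 0, (ih a ha.imm).2⟩) (fun b hb => ?_)
    rcases isRightOption_add_iff.1 hb with ⟨_, h0, _⟩ | ⟨x', hx', rfl⟩
    exacts [absurd h0 not_isRightOption_zero, ⟨x', hx', (ih x' hx'.imm).2⟩]

theorem add_le_add_right_and_lf (x x' y : PGame.{u}) :
    (x ≤ x' → x + y ≤ x' + y) ∧ (x ⧏ x' → x + y ⧏ x' + y) := by
  induction x using imm_wf.induction generalizing x' y with | _ x ihx =>
  induction x' using imm_wf.induction generalizing y with | _ x' ihx' =>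
  induction y using imm_wf.induction with | _ y ihy =>
  refine ⟨fun h => le_iff_forall_lf.2 ⟨fun a ha => ?_, fun b hb => ?_⟩, fun h => ?_⟩
  · rcases isLeftOption_add_iff.1 ha with ⟨xl, hxl, rfl⟩ | ⟨yl, hyl, rfl⟩
    · exact (ihx xl hxl.imm x' y).2 (leftOption_lf_of_le h hxl)
    · exact lf_of_le_leftOption (hyl.add_left x') ((ihy yl hyl.imm).1 h)
  · rcases isRightOption_add_iff.1 hb with ⟨xr, hxr, rfl⟩ | ⟨yr, hyr, rfl⟩
    · exact (ihx' xr hxr.imm y).2 (lf_rightOption_of_le h hxr)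
    · exact lf_of_rightOption_le (hyr.add_left x) ((ihy yr hyr.imm).1 h)
  · rcases lf_iff_exists_le.1 h with ⟨xl, hxl, hle⟩ | ⟨xr, hxr, hle⟩
    · exact lf_of_le_leftOption (hxl.add_right y) ((ihx' xl hxl.imm y).1 hle)
    · exact lf_of_rightOption_le (hxr.add_right y) ((ihx xr hxr.imm x' y).1 hle)

protected theorem add_le_add_right (h : x ≤ x') (y : PGame.{u}) : x + y ≤ x' + y :=
  (add_le_add_right_and_lf x x' y).1 h

protected theorem add_le_add_left (h : y ≤ y') (x : PGame.{u}) : x + y ≤ x + y' :=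
  calc x + y ≤ y + x := add_comm_le x y
    _ ≤ y' + x := PGame.add_le_add_right h x
    _ ≤ x + y' := add_comm_le y' x

theorem add_congr (hx : x ≈ x') (hy : y ≈ y') : x + y ≈ x' + y' :=
  ⟨(PGame.add_le_add_right hx.1 y).trans (PGame.add_le_add_left hy.1 x'),
    (PGame.add_le_add_right hx.2 y').trans (PGame.add_le_add_left hy.2 x)⟩

theorem neg_add_cancel_equiv (x : PGame.{u}) : -x + x ≈ 0 := by
  induction x using imm_wf.induction with | _ x ih =>
  constructor
  · refine le_iff_forall_lf.2 ⟨fun a ha => ?_, fun b hb => absurd hb not_isRightOption_zero⟩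
    rcases isLeftOption_add_iff.1 ha with ⟨_, hn, rfl⟩ | ⟨xl, hxl, rfl⟩
    · obtain ⟨xr, hxr, rfl⟩ := isLeftOption_neg_iff.1 hn
      exact lf_of_rightOption_le (hxr.add_left _) (ih xr hxr.imm).1
    · exact lf_of_rightOption_le ((isRightOption_neg_iff.2 ⟨xl, hxl, rfl⟩).add_right _)
        (ih xl hxl.imm).1
  · refine le_iff_forall_lf.2 ⟨fun a ha => absurd ha not_isLeftOption_zero, fun b hb => ?_⟩
    rcases isRightOption_add_iff.1 hb with ⟨_, hn, rfl⟩ | ⟨xr, hxr, rfl⟩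
    · obtain ⟨xl, hxl, rfl⟩ := isRightOption_neg_iff.1 hn
      exact lf_of_le_leftOption (hxl.add_left _) (ih xl hxl.imm).2
    · exact lf_of_le_leftOption ((isLeftOption_neg_iff.2 ⟨xr, hxr, rfl⟩).add_right _)
        (ih xr hxr.imm).2

end Add

end SetTheory.PGame

namespace SetTheory

abbrev Game : Type (u + 1) := Quotient PGame.setoid.{u}

namespace Game

instance : Zero Game.{u} := ⟨⟦0⟧⟩

instance : Add Game.{u} := ⟨Quotient.map₂ (· + ·) fun _ _ hx _ _ hy => PGame.add_congr hx hy⟩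

theorem mk_add (x y : PGame.{u}) : (⟦x + y⟧ : Game) = ⟦x⟧ + ⟦y⟧ := rfl

instance : AddCommMonoid Game.{u} where
  add_assoc := by rintro ⟨x⟩ ⟨y⟩ ⟨z⟩; exact Quotient.sound (PGame.add_assoc_equiv x y z)
  zero_add := by rintro ⟨x⟩; exact Quotient.sound (PGame.zero_add_equiv x)
  add_zero := by
    rintro ⟨x⟩; exact Quotient.sound ((PGame.add_comm_equiv x 0).trans (PGame.zero_add_equiv x))
  add_comm := by rintro ⟨x⟩ ⟨y⟩; exact Quotient.sound (PGame.add_comm_equiv x y)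
  nsmul := nsmulRec

theorem mk_neg_add_cancel (x : PGame.{u}) : (⟦-x⟧ : Game) + ⟦x⟧ = 0 :=
  Quotient.sound (PGame.neg_add_cancel_equiv x)

/-- Well defined because additive inverses in a monoid are unique. -/
instance : Neg Game.{u} :=
  ⟨Quotient.lift (fun x => ⟦-x⟧) fun x y h =>
    left_neg_eq_right_neg (mk_neg_add_cancel x)
      (by rw [Quotient.sound h, add_comm, mk_neg_add_cancel])⟩

theorem mk_neg (x : PGame.{u}) : (⟦-x⟧ : Game) = -⟦x⟧ := rfl

instance : AddCommGroup Game.{u} where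
  neg_add_cancel := by rintro ⟨x⟩; exact mk_neg_add_cancel x
  zsmul := zsmulRec

end Game

end SetTheory

namespace MixedDeletion

theorem mk_natUp (n : ℕ) : (⟦natUp n⟧ : Game) = n • ⟦up⟧ := by
  induction n with
  | zero => exact (zero_nsmul _).symm
  | succ n ih => rw [natUp, Game.mk_add, ih, succ_nsmul]

theorem mk_zUp (z : ℤ) : (⟦zUp z⟧ : Game) = z • ⟦up⟧ := by
  unfold zUp
  split_ifs with hz
  · rw [mk_natUp, ← natCast_zsmul, Int.toNat_of_nonneg hz]
  · rw [Game.mk_neg, mk_natUp, ← natCast_zsmul, ← neg_zsmul, Int.toNat_of_nonneg (by omega),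
      neg_neg]

theorem zUp_add_equiv (a b : ℤ) : zUp a + zUp b ≈ zUp (a + b) :=
  Quotient.exact (by rw [Game.mk_add, mk_zUp, mk_zUp, mk_zUp, add_zsmul])

theorem SameOutcome.of_equiv {A B : PGame} (h : A ≈ B) : SameOutcome A B :=
  ⟨not_congr (AntisymmRel.le_congr_left h), not_congr (AntisymmRel.le_congr_right h)⟩

theorem SameOutcome.symm {A B : PGame} (h : SameOutcome A B) : SameOutcome B A :=
  ⟨h.1.symm, h.2.symm⟩

theorem SameOutcome.trans {A B C : PGame} (h₁ : SameOutcome A B) (h₂ : SameOutcome B C) :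
    SameOutcome A C :=
  ⟨h₁.1.trans h₂.1, h₁.2.trans h₂.2⟩

section FarStar

variable {G G' H H' : PGame}

theorem FarStarEquiv.of_equiv (h : G ≈ G') : FarStarEquiv G G' := fun X _ _ =>
  SameOutcome.of_equiv (PGame.add_congr (PGame.add_congr h (Setoid.refl X)) (Setoid.refl _))

theorem FarStarEquiv.trans {G₃ : PGame} (h₁ : FarStarEquiv G G') (h₂ : FarStarEquiv G' G₃) :
    FarStarEquiv G G₃ := fun X k hk =>
  (h₁ X k hk).trans (h₂ X k hk)

theorem FarStarEquiv.add_left (h : FarStarEquiv H H') (G : PGame) :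
    FarStarEquiv (G + H) (G + H') := by
  intro X k hk
  have shift (K : PGame) : G + K + X + nim k ≈ K + (G + X) + nim k :=
    Quotient.exact (by simp only [Game.mk_add]; abel)
  exact (SameOutcome.of_equiv (shift H)).trans
    ((h (G + X) k hk).trans (SameOutcome.of_equiv (shift H')).symm)

theorem FarStarEquiv.add (hG : FarStarEquiv G G') (hH : FarStarEquiv H H') :
    FarStarEquiv (G + H) (G' + H') :=
  (hH.add_left G).trans <| (of_equiv (PGame.add_comm_equiv G H')).trans <|
    (hG.add_left H').trans (of_equiv (PGame.add_comm_equiv H' G'))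

end FarStar

/-- Atomic weights are additive: `AW(G + H) = AW(G) + AW(H)` whenever both atomic
weights exist. -/
theorem atomic_weight_add :
    ∀ (G H : PGame) (a b : ℤ), AtomicWeight G a → AtomicWeight H b →
      AtomicWeight (G + H) (a + b) := by
  intro G H a b hG hH
  exact (FarStarEquiv.add hG hH).trans (.of_equiv (zUp_add_equiv a b))

end MixedDeletion
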